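/- Let X be a topological space and p a point of X with no finite local base. Then the local Noetherian type χNt(p,X) (the least infinite κ for which p has a κ^op-like local base) equals the least infinite κ for which there exists a local ⟨χ(p,X), κ⟩-splitter at p. Moreover, if λ > χ(p,X), then there is no local ⟨λ,κ⟩-splitter at p for any κ < λ or κ ≤ cf(λ). -/

import Mathlib

open Cardinal Set

universe u

variable {X : Type u}

/-- `B` is a base for the topology of `X`. -/
def IsBase [TopologicalSpace X] (B : Set (Set X)) : Prop :=
  (∀ U ∈ B, IsOpen U) ∧ ∀ W : Set X, IsOpen W → ∀ p ∈ W, ∃ U ∈ B, p ∈ U ∧ U ⊆ W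

/-- `B` is a local base at `p`. -/
def IsLocalBase [TopologicalSpace X] (p : X) (B : Set (Set X)) : Prop :=
  (∀ U ∈ B, IsOpen U ∧ p ∈ U) ∧ ∀ W : Set X, IsOpen W → p ∈ W → ∃ U ∈ B, U ⊆ W

/-- `B` is a local π-base at `p`. -/
def IsLocalPiBase [TopologicalSpace X] (p : X) (B : Set (Set X)) : Prop :=
  (∀ U ∈ B, IsOpen U ∧ U.Nonempty) ∧ ∀ W : Set X, IsOpen W → p ∈ W → ∃ U ∈ B, U ⊆ W

/-- The weight of `X`: the least infinite cardinal `κ` such that `X` has a base of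
cardinality at most `κ`. -/
noncomputable def weight (X : Type u) [TopologicalSpace X] : Cardinal.{u} :=
  sInf {κ | ℵ₀ ≤ κ ∧ ∃ B : Set (Set X), IsBase B ∧ #B ≤ κ}

/-- The character of `p` in `X`. -/
noncomputable def character [TopologicalSpace X] (p : X) : Cardinal.{u} :=
  sInf {κ | ℵ₀ ≤ κ ∧ ∃ B : Set (Set X), IsLocalBase p B ∧ #B ≤ κ}

/-- The π-character of `p` in `X`. -/
noncomputable def piCharacter [TopologicalSpace X] (p : X) : Cardinal.{u} :=
  sInf {κ | ℵ₀ ≤ κ ∧ ∃ B : Set (Set X), IsLocalPiBase p B ∧ #B ≤ κ}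

/-- A family of sets (ordered by `⊆`) is `κ^op`-like if no member is contained in
`κ`-many members. -/
def IsOpLike {Y : Type u} (B : Set (Set Y)) (κ : Cardinal.{u}) : Prop :=
  ∀ U ∈ B, #{V : Set Y // V ∈ B ∧ U ⊆ V} < κ

/-- The Noetherian type of `X`: the least infinite `κ` such that `X` has a
`κ^op`-like base. -/
noncomputable def Nt (X : Type u) [TopologicalSpace X] : Cardinal.{u} :=
  sInf {κ | ℵ₀ ≤ κ ∧ ∃ B : Set (Set X), IsBase B ∧ IsOpLike B κ}

/-- `⟨F i⟩` is a `⟨#ι, κ⟩`-splitter of `X`: a sequence of finite open covers such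
that for every index set `I` of cardinality `κ` and every choice `U i ∈ F i`
(`i ∈ I`), the interior of `⋂_{i ∈ I} U i` is empty. -/
def IsSplitter [TopologicalSpace X] {ι : Type u} (F : ι → Set (Set X))
    (κ : Cardinal.{u}) : Prop :=
  (∀ i, (F i).Finite ∧ (∀ U ∈ F i, IsOpen U) ∧ ⋃₀ F i = Set.univ) ∧
  ∀ (I : Set ι) (U : ι → Set X), #I = κ → (∀ i ∈ I, U i ∈ F i) →
    interior (⋂ i ∈ I, U i) = ∅

/-- The local Noetherian type of `p`: the least infinite `κ` such that `p` has a
`κ^op`-like local base. -/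
noncomputable def locNt [TopologicalSpace X] (p : X) : Cardinal.{u} :=
  sInf {κ | ℵ₀ ≤ κ ∧ ∃ B : Set (Set X), IsLocalBase p B ∧ IsOpLike B κ}

/-- `U` is a local `⟨#U, κ⟩`-splitter at `p`: a family of open neighborhoods of `p`
such that `p` is not in the interior of `⋂ V` for any `V ∈ [U]^κ`. -/
def IsLocalSplitter [TopologicalSpace X] (p : X) (U : Set (Set X))
    (κ : Cardinal.{u}) : Prop :=
  (∀ V ∈ U, IsOpen V ∧ p ∈ V) ∧
  ∀ V ⊆ U, #V = κ → p ∉ interior (⋂₀ V)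

/-! A local base `B` with `#B ≤ χ(p)` and a local `κ`-splitter `U` with `#U = χ(p)` give,
through an injection `e : B → U`, the local base `{b ∩ e b}`; it is `κ^op`-like because a member lies
below at most as many of these sets as there are members of `U` above it, and fewer than `κ`
members of `U` contain a fixed neighbourhood of `p`. Conversely, a `κ^op`-like local base thinned
to cardinality `χ(p)` is a local `κ`-splitter, since every neighbourhood of `p` contains a base
member, which lies below fewer than `κ` base members.

For `λ > χ(p)`, every member of a local `⟨λ,κ⟩`-splitter contains a member of a local base of
cardinality `χ(p) < λ`; when `κ < λ` or `κ ≤ cf λ` the pigeonhole principle puts `κ` of them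
above a single base member, an open neighbourhood of `p` inside their intersection. -/

theorem Cardinal.sum_lt_of_forall_lt {ι : Type u} {f : ι → Cardinal.{u}} {κ lam : Cardinal.{u}}
    (hκ : ℵ₀ ≤ κ) (hι : #ι < lam) (hf : ∀ i, f i < κ) (h : κ < lam ∨ κ ≤ lam.ord.cof) :
    sum f < lam := by
  rcases lt_or_ge κ lam with hlt | hge
  · calc sum f ≤ sum fun _ : ι => κ := sum_le_sum _ _ fun i => (hf i).le
      _ = #ι * κ := sum_const' ι κ
      _ ≤ max (max #ι κ) ℵ₀ := mul_le_max _ _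
      _ < lam := max_lt (max_lt hι hlt) (hκ.trans_lt hlt)
  · have hcof : κ ≤ lam.ord.cof := h.resolve_left hge.not_gt
    have hκlam : κ ≤ lam := hcof.trans (Ordinal.cof_ord_le lam)
    have hreg : lam.IsRegular := ⟨hκ.trans hκlam, hge.trans hcof⟩
    exact sum_lt_of_isRegular hreg hι fun i => (hf i).trans_le hκlam

theorem IsOpLike.mono {Y : Type u} {B₁ B₂ : Set (Set Y)} {κ : Cardinal.{u}}
    (h : IsOpLike B₁ κ) (hB : B₂ ⊆ B₁) : IsOpLike B₂ κ := fun U hU =>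
  (mk_subtype_mono fun _ hV => ⟨hB hV.1, hV.2⟩).trans_lt (h U (hB hU))

section LocalBase

variable [TopologicalSpace X] {p : X}

theorem isLocalBase_isOpen_mem (p : X) : IsLocalBase p {U : Set X | IsOpen U ∧ p ∈ U} :=
  ⟨fun _ hU => hU, fun W hW hpW => ⟨W, ⟨hW, hpW⟩, subset_rfl⟩⟩

theorem character_mem (p : X) :
    character p ∈ {κ | ℵ₀ ≤ κ ∧ ∃ B : Set (Set X), IsLocalBase p B ∧ #B ≤ κ} :=
  csInf_mem ⟨_, le_max_left _ _, _, isLocalBase_isOpen_mem p, le_max_right ℵ₀ _⟩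

theorem locNt_mem (p : X) :
    locNt p ∈ {κ | ℵ₀ ≤ κ ∧ ∃ B : Set (Set X), IsLocalBase p B ∧ IsOpLike B κ} := by
  refine csInf_mem ⟨max (Order.succ #{U : Set X | IsOpen U ∧ p ∈ U}) ℵ₀, le_max_right _ _, _,
    isLocalBase_isOpen_mem p, fun U _ => ?_⟩
  exact ((mk_subtype_mono fun _ hV => hV.1).trans_lt (Order.lt_succ _)).trans_le (le_max_left _ _)

theorem character_le_mk_of_isLocalBase
    (hnf : ∀ B : Set (Set X), IsLocalBase p B → B.Infinite)
    {B : Set (Set X)} (hB : IsLocalBase p B) : character p ≤ #B :=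
  csInf_le' ⟨aleph0_le_mk_iff.mpr (infinite_coe_iff.mpr (hnf B hB)), B, hB, le_rfl⟩

theorem IsLocalBase.exists_subset_mk_le_character {B₁ : Set (Set X)} (hB₁ : IsLocalBase p B₁) :
    ∃ B₂ ⊆ B₁, IsLocalBase p B₂ ∧ #B₂ ≤ character p := by
  obtain ⟨-, C, hC, hCcard⟩ := character_mem p
  have hshrink (c : C) : ∃ V ∈ B₁, V ⊆ c := hB₁.2 c (hC.1 c c.2).1 (hC.1 c c.2).2
  choose g hgB₁ hgc using hshrink
  refine ⟨range g, range_subset_iff.2 hgB₁,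
    ⟨fun V hV => hB₁.1 V (range_subset_iff.2 hgB₁ hV), fun W hW hpW => ?_⟩,
    mk_range_le.trans hCcard⟩
  obtain ⟨c, hc, hcW⟩ := hC.2 W hW hpW
  exact ⟨g ⟨c, hc⟩, mem_range_self _, (hgc _).trans hcW⟩

theorem IsLocalBase.mk_le_sum_supersets {B U : Set (Set X)} (hB : IsLocalBase p B)
    (hU : ∀ V ∈ U, IsOpen V ∧ p ∈ V) :
    #U ≤ sum fun b : B => #{V : Set X // V ∈ U ∧ (b : Set X) ⊆ V} := by
  have hshrink (V : U) : ∃ b ∈ B, b ⊆ V := hB.2 V (hU V V.2).1 (hU V V.2).2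
  choose f hfB hfV using hshrink
  rw [← mk_sigma]
  exact mk_le_of_injective (f := fun V => ⟨⟨f V, hfB V⟩, ⟨V, V.2, hfV V⟩⟩) fun V V' h =>
    Subtype.ext (congrArg (fun s : Σ b : B, {V : Set X // V ∈ U ∧ (b : Set X) ⊆ V} => s.2.1) h)

end LocalBase

section LocalSplitter

variable [TopologicalSpace X] {p : X} {U : Set (Set X)} {κ : Cardinal.{u}}

theorem isLocalSplitter_iff : IsLocalSplitter p U κ ↔ (∀ V ∈ U, IsOpen V ∧ p ∈ V) ∧
    ∀ W : Set X, IsOpen W → p ∈ W → #{V : Set X // V ∈ U ∧ W ⊆ V} < κ := by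
  refine and_congr_right fun _ => ⟨fun hs W hW hpW => ?_, fun hlt V hVU hV hp => ?_⟩
  · by_contra! hle
    obtain ⟨T, hT, hTcard⟩ := le_mk_iff_exists_subset.mp hle
    exact hs T (fun V hV => (hT hV).1) hTcard
      (interior_maximal (subset_sInter fun V hV => (hT hV).2) hW hpW)
  · have hle : #V ≤ #{V' : Set X // V' ∈ U ∧ interior (⋂₀ V) ⊆ V'} :=
      mk_le_of_injective
        (f := fun V' => ⟨V', hVU V'.2, interior_subset.trans (sInter_subset_of_mem V'.2)⟩)
        fun _ _ h => Subtype.ext (by simpa using h)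
    exact (hle.trans_lt (hlt _ isOpen_interior hp)).ne hV

theorem IsLocalBase.isLocalSplitter_of_isOpLike {B : Set (Set X)} (hB : IsLocalBase p B)
    (hop : IsOpLike B κ) : IsLocalSplitter p B κ := by
  refine isLocalSplitter_iff.2 ⟨hB.1, fun W hW hpW => ?_⟩
  obtain ⟨b, hb, hbW⟩ := hB.2 W hW hpW
  exact (mk_subtype_mono fun V hV => ⟨hV.1, hbW.trans hV.2⟩).trans_lt (hop b hb)

theorem IsLocalSplitter.exists_isLocalBase_isOpLike (hs : IsLocalSplitter p U κ)
    {B : Set (Set X)} (hB : IsLocalBase p B) (hBU : #B ≤ #U) :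
    ∃ B' : Set (Set X), IsLocalBase p B' ∧ IsOpLike B' κ := by
  obtain ⟨e⟩ := (le_def _ _).1 hBU
  rw [isLocalSplitter_iff] at hs
  set F : B → Set X := fun b => b ∩ e b
  have hF (b : B) : IsOpen (F b) ∧ p ∈ F b :=
    ⟨(hB.1 b b.2).1.inter (hs.1 _ (e b).2).1, (hB.1 b b.2).2, (hs.1 _ (e b).2).2⟩
  refine ⟨range F, ⟨forall_mem_range.2 hF, fun W hW hpW => ?_⟩, forall_mem_range.2 fun b₀ => ?_⟩
  · obtain ⟨b, hb, hbW⟩ := hB.2 W hW hpW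
    exact ⟨F ⟨b, hb⟩, mem_range_self _, inter_subset_left.trans hbW⟩
  have himage : {V : Set X | V ∈ range F ∧ F b₀ ⊆ V} = F '' {b | F b₀ ⊆ F b} := by
    ext V; constructor
    · rintro ⟨⟨b, rfl⟩, h⟩; exact ⟨b, h, rfl⟩
    · rintro ⟨b, h, rfl⟩; exact ⟨mem_range_self _, h⟩
  calc #{V : Set X // V ∈ range F ∧ F b₀ ⊆ V}
      = #(F '' {b | F b₀ ⊆ F b}) := congrArg (fun s : Set (Set X) => #s) himage
    _ ≤ #{b | F b₀ ⊆ F b} := mk_image_le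
    _ ≤ #{V : Set X // V ∈ U ∧ F b₀ ⊆ V} :=
        mk_le_of_injective (f := fun b => ⟨e b.1, (e b.1).2, b.2.trans inter_subset_right⟩)
          fun b b' h => Subtype.ext (e.injective (Subtype.ext (by simpa using h)))
    _ < κ := hs.2 _ (hF b₀).1 (hF b₀).2

end LocalSplitter

/-- Lemma: if `p` has no finite local base then `χNt(p,X)` is the least infinite `κ`
for which there is a local `⟨χ(p,X), κ⟩`-splitter at `p`; moreover, for `λ > χ(p,X)`
there is no local `⟨λ,κ⟩`-splitter at `p` for any infinite `κ < λ` or `κ ≤ cf λ`. -/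
theorem locNt_eq_least_local_splitter
    [TopologicalSpace X] (p : X)
    (hnf : ∀ B : Set (Set X), IsLocalBase p B → B.Infinite) :
    locNt p =
      sInf {κ | ℵ₀ ≤ κ ∧ ∃ U : Set (Set X), #U = character p ∧ IsLocalSplitter p U κ} ∧
    ∀ lam κ' : Cardinal.{u}, ℵ₀ ≤ κ' → character p < lam →
      (κ' < lam ∨ κ' ≤ lam.ord.cof) →
      ¬ ∃ U : Set (Set X), #U = lam ∧ IsLocalSplitter p U κ' := by
  constructor
  · obtain ⟨hκ, B₁, hB₁, hop⟩ := locNt_mem p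
    obtain ⟨B₂, hB₂B₁, hB₂, hB₂card⟩ := hB₁.exists_subset_mk_le_character
    have hmem : locNt p ∈
        {κ | ℵ₀ ≤ κ ∧ ∃ U : Set (Set X), #U = character p ∧ IsLocalSplitter p U κ} :=
      ⟨hκ, B₂, hB₂card.antisymm (character_le_mk_of_isLocalBase hnf hB₂),
        hB₂.isLocalSplitter_of_isOpLike (hop.mono hB₂B₁)⟩
    refine le_antisymm ?_ (csInf_le' hmem)
    obtain ⟨hκ', U, hU, hs⟩ := csInf_mem ⟨_, hmem⟩
    obtain ⟨-, B, hB, hBcard⟩ := character_mem p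
    obtain ⟨B', hB', hop'⟩ := hs.exists_isLocalBase_isOpLike hB (hBcard.trans hU.ge)
    exact csInf_le' ⟨hκ', B', hB', hop'⟩
  · rintro lam κ hκ hlam hcase ⟨U, rfl, hs⟩
    obtain ⟨-, B, hB, hBcard⟩ := character_mem p
    have hsupersets (b : B) : #{V : Set X // V ∈ U ∧ (b : Set X) ⊆ V} < κ :=
      (isLocalSplitter_iff.1 hs).2 b (hB.1 b b.2).1 (hB.1 b b.2).2
    exact (hB.mk_le_sum_supersets hs.1).not_gt
      (sum_lt_of_forall_lt hκ (hBcard.trans_lt hlam) hsupersets hcase)
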